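/- For all noise levels 0 < σ₁ ≤ σ₂ and every threshold δ ≥ 0, the optimal opt-in utility satisfies U*(0, σ₁) ≥ U*(δ, σ₂); that is, a zero-threshold test with higher accuracy (smaller noise) yields at least as high an opt-in utility as any test with larger noise, so higher accuracy increases the audit's coverage. -/

import Mathlib

open ProbabilityTheory

/-- The cumulative distribution function of the standard normal distribution. -/
noncomputable def stdNormalCDF : ℝ → ℝ :=
  fun t => ProbabilityTheory.cdf (ProbabilityTheory.gaussianReal 0 1) t

/-- The test function `p(x; δ, σ) := 1 − Φ((δ − x)/σ)`. -/
noncomputable def testFn (δ σ x : ℝ) : ℝ := 1 - stdNormalCDF ((δ - x) / σ)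

/-- `G(x, δ, σ) := −c·x + p(x;δ,σ)·R/(1 − α + α·p(x;δ,σ))`. -/
noncomputable def Gfun (α c R δ σ x : ℝ) : ℝ :=
  -c * x + testFn δ σ x * R / (1 - α + α * testFn δ σ x)

/-- The optimal opt-in utility `U*(δ,σ) := sup_{x ≥ 0} G(x,δ,σ)`. -/
noncomputable def optIn (α c R δ σ : ℝ) : ℝ :=
  sSup ((fun x => Gfun α c R δ σ x) '' {x | 0 ≤ x})

/-! Scaling the effort by `σ₁ / σ₂` turns the zero-threshold test with noise `σ₁` into the one
with noise `σ₂`, and lowering the threshold to `0` only raises the passing probability. So every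
effort `x` under `(δ, σ₂)` is matched by the cheaper effort `σ₁ / σ₂ * x` under `(0, σ₁)`, which
passes at least as often; since the reward term is increasing in the passing probability, this
effort is at least as good. -/

lemma testFn_nonneg (δ σ x : ℝ) : 0 ≤ testFn δ σ x :=
  sub_nonneg.2 (cdf_le_one _ _)

lemma testFn_le_one (δ σ x : ℝ) : testFn δ σ x ≤ 1 :=
  sub_le_self _ (cdf_nonneg _ _)

lemma testFn_le_testFn_of_le {δ δ' σ : ℝ} (hσ : 0 ≤ σ) (hδ : δ ≤ δ') (x : ℝ) :
    testFn δ' σ x ≤ testFn δ σ x := by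
  unfold testFn
  gcongr
  exact (cdf _).mono (by gcongr)

lemma testFn_zero_div_mul {σ₁ : ℝ} (hσ₁ : σ₁ ≠ 0) (σ₂ x : ℝ) :
    testFn 0 σ₁ (σ₁ / σ₂ * x) = testFn 0 σ₂ x := by
  unfold testFn
  congr 2
  field_simp
  ring

section RewardTerm

variable {α R p q : ℝ}

lemma mul_div_one_sub_add_mul_le_mul_div (hα0 : 0 ≤ α) (hα1 : α < 1) (hR : 0 ≤ R)
    (hp : 0 ≤ p) (hpq : p ≤ q) :
    p * R / (1 - α + α * p) ≤ q * R / (1 - α + α * q) := by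
  rw [div_le_div_iff₀ (by nlinarith) (by nlinarith)]
  nlinarith [mul_nonneg (mul_nonneg hR (sub_nonneg.2 hα1.le)) (sub_nonneg.2 hpq)]

lemma mul_div_one_sub_add_mul_le (hα0 : 0 ≤ α) (hα1 : α < 1) (hR : 0 ≤ R)
    (hp : 0 ≤ p) (hp1 : p ≤ 1) :
    p * R / (1 - α + α * p) ≤ R := by
  rw [div_le_iff₀ (by nlinarith)]
  nlinarith [mul_nonneg (mul_nonneg hR (sub_nonneg.2 hα1.le)) (sub_nonneg.2 hp1)]

end RewardTerm

section Utility

variable {α c R : ℝ}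

lemma Gfun_le_Gfun (hα0 : 0 ≤ α) (hα1 : α < 1) (hc : 0 ≤ c) (hR : 0 ≤ R)
    {δ σ δ' σ' x x' : ℝ} (hx : x' ≤ x) (hp : testFn δ σ x ≤ testFn δ' σ' x') :
    Gfun α c R δ σ x ≤ Gfun α c R δ' σ' x' := by
  unfold Gfun
  gcongr ?_ + ?_
  · nlinarith
  · exact mul_div_one_sub_add_mul_le_mul_div hα0 hα1 hR (testFn_nonneg _ _ _) hp

lemma bddAbove_Gfun_image (hα0 : 0 ≤ α) (hα1 : α < 1) (hc : 0 ≤ c) (hR : 0 ≤ R) (δ σ : ℝ) :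
    BddAbove ((fun x => Gfun α c R δ σ x) '' {x | 0 ≤ x}) := by
  refine ⟨R, ?_⟩
  rintro _ ⟨x, hx : 0 ≤ x, rfl⟩
  have := mul_div_one_sub_add_mul_le hα0 hα1 hR (testFn_nonneg δ σ x) (testFn_le_one δ σ x)
  unfold Gfun
  nlinarith

end Utility

/-- Let `α ∈ (0,1)`, `c > 0`, `R > 0`.  For all noise levels
`0 < σ₁ ≤ σ₂` and every threshold `δ ≥ 0`, `U*(0,σ₁) ≥ U*(δ,σ₂)`: a
zero-threshold, more accurate test yields at least as high an opt-in utility as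
any test with larger noise. -/
theorem optIn_zero_threshold_small_noise_ge
    (α c R : ℝ) (hα0 : 0 < α) (hα1 : α < 1) (hc : 0 < c) (hR : 0 < R)
    (σ₁ σ₂ : ℝ) (hσ₁ : 0 < σ₁) (hσ : σ₁ ≤ σ₂)
    (δ : ℝ) (hδ : 0 ≤ δ) :
    optIn α c R δ σ₂ ≤ optIn α c R 0 σ₁ := by
  have hσ₂ : 0 < σ₂ := hσ₁.trans_le hσ
  refine csSup_le ⟨_, 0, le_refl (0 : ℝ), rfl⟩ ?_
  rintro _ ⟨x, hx : 0 ≤ x, rfl⟩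
  have hratio : σ₁ / σ₂ ≤ 1 := (div_le_one hσ₂).2 hσ
  have hcheaper : σ₁ / σ₂ * x ≤ x := mul_le_of_le_one_left hx hratio
  have hpasses : testFn δ σ₂ x ≤ testFn 0 σ₁ (σ₁ / σ₂ * x) := by
    rw [testFn_zero_div_mul hσ₁.ne']
    exact testFn_le_testFn_of_le hσ₂.le hδ x
  calc Gfun α c R δ σ₂ x
      ≤ Gfun α c R 0 σ₁ (σ₁ / σ₂ * x) :=
        Gfun_le_Gfun hα0.le hα1 hc.le hR.le hcheaper hpasses
    _ ≤ optIn α c R 0 σ₁ :=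
        le_csSup (bddAbove_Gfun_image hα0.le hα1 hc.le hR.le 0 σ₁)
          ⟨_, mul_nonneg (by positivity) hx, rfl⟩
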